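/- Let μ ∈ (0,1) and suppose H ∈ C¹(ℝ) with H' measurable, and there exist nonzero constants h₊, h₋ with lim_{x→+∞} e^{μ√2 x} H'(x) = h₊ and lim_{x→−∞} e^{−μ√2 x} H'(x) = h₋, with |e^{±μ√2 x}H'(x)| uniformly bounded. Then the Melnikov function S(ψ) = ∫_ℝ H'(y + ψ/√2)·W_h(y) dy satisfies lim_{ψ→+∞} e^{μψ} S(ψ) = h₊·w₊ and lim_{ψ→−∞} e^{−μψ} S(ψ) = h₋·w₋, where w₊ = ∫_ℝ e^{−μ√2 y} W_h(y) dy and w₋ = ∫_ℝ e^{μ√2 y} W_h(y) dy, both finite and positive. -/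

import Mathlib

open Real Filter Topology MeasureTheory

/-- The Melnikov weight `W_h(y) = tanh²((√2/2)y)(1 − tanh²((√2/2)y))`. -/
noncomputable def Wh (y : ℝ) : ℝ :=
  (Real.tanh (Real.sqrt 2 / 2 * y)) ^ 2 * (1 - (Real.tanh (Real.sqrt 2 / 2 * y)) ^ 2)

lemma sqrt2_pos : (0:ℝ) < Real.sqrt 2 := Real.sqrt_pos.mpr (by norm_num)

lemma tanh_sq_lt_one (x : ℝ) : Real.tanh x ^ 2 < 1 := by
  rw [Real.tanh_eq_sinh_div_cosh, div_pow, div_lt_one (by positivity)]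
  nlinarith [Real.cosh_sq x, Real.cosh_pos x]

lemma Wh_nonneg (y : ℝ) : 0 ≤ Wh y :=
  mul_nonneg (sq_nonneg _) (by have := _root_.tanh_sq_lt_one (Real.sqrt 2 / 2 * y); linarith)

lemma Wh_pos {y : ℝ} (hy : 0 < y) : 0 < Wh y := by
  have h1 : 0 < Real.sinh (Real.sqrt 2 / 2 * y) :=
    Real.sinh_pos_iff.mpr (by positivity)
  have h2 : 0 < Real.tanh (Real.sqrt 2 / 2 * y) := by
    rw [Real.tanh_eq_sinh_div_cosh]; exact div_pos h1 (Real.cosh_pos _)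
  have h3 := _root_.tanh_sq_lt_one (Real.sqrt 2 / 2 * y)
  exact mul_pos (by positivity) (by linarith)

lemma exp_abs_le_two_cosh (x : ℝ) : Real.exp |x| ≤ 2 * Real.cosh x := by
  rw [Real.cosh_eq]
  rcases abs_cases x with ⟨h, _⟩ | ⟨h, _⟩ <;> rw [h] <;>
    [nlinarith [Real.exp_pos (-x)]; nlinarith [Real.exp_pos x]]

lemma Wh_le (y : ℝ) : Wh y ≤ 4 * Real.exp (-(Real.sqrt 2 * |y|)) := by
  set x := Real.sqrt 2 / 2 * y with hx
  have h1 : Wh y ≤ 1 - Real.tanh x ^ 2 := by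
    have h := _root_.tanh_sq_lt_one x
    have : Wh y = Real.tanh x ^ 2 * (1 - Real.tanh x ^ 2) := rfl
    rw [this]
    nlinarith [sq_nonneg (Real.tanh x)]
  have h2 : 1 - Real.tanh x ^ 2 = 1 / Real.cosh x ^ 2 := by
    rw [Real.tanh_eq_sinh_div_cosh, div_pow]
    have hc : Real.cosh x ^ 2 ≠ 0 := by positivity
    field_simp
    linarith [Real.cosh_sq x]
  have hax : |x| = Real.sqrt 2 / 2 * |y| := by
    rw [hx, abs_mul, abs_of_nonneg (by positivity : (0:ℝ) ≤ Real.sqrt 2 / 2)]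
  have h3 : Real.exp |x| ^ 2 ≤ (2 * Real.cosh x) ^ 2 := by
    have := exp_abs_le_two_cosh x
    nlinarith [Real.exp_pos |x|]
  have h4 : 1 / Real.cosh x ^ 2 ≤ 4 / Real.exp |x| ^ 2 := by
    rw [div_le_div_iff₀ (by positivity) (by positivity)]
    nlinarith
  have hexp : Real.exp |x| ^ 2 = Real.exp (Real.sqrt 2 * |y|) := by
    rw [← Real.exp_nat_mul]
    congr 1
    rw [hax]
    push_cast
    ring
  have h5 : (4:ℝ) / Real.exp |x| ^ 2 = 4 * Real.exp (-(Real.sqrt 2 * |y|)) := by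
    rw [hexp, Real.exp_neg, div_eq_mul_inv]
  linarith [h1, h2 ▸ h1, h4.trans_eq h5]

lemma continuous_Wh : Continuous Wh := by
  have ht : Continuous Real.tanh := by
    have : Real.tanh = fun x => Real.sinh x / Real.cosh x := by
      funext x; exact Real.tanh_eq_sinh_div_cosh x
    rw [this]
    exact Real.continuous_sinh.div Real.continuous_cosh fun x => (Real.cosh_pos x).ne'
  unfold Wh; fun_prop

lemma integrable_exp_neg_abs {b : ℝ} (hb : 0 < b) :
    Integrable (fun x : ℝ => Real.exp (-(b * |x|))) := by
  have A : MeasurableEmbedding (fun x : ℝ => -x) :=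
    (Homeomorph.neg ℝ).isClosedEmbedding.measurableEmbedding
  have h1 : IntegrableOn (fun x : ℝ => Real.exp (-(b * |x|))) (Set.Ioi 0) := by
    refine (exp_neg_integrableOn_Ioi 0 hb).congr_fun (fun x hx => ?_) measurableSet_Ioi
    rw [abs_of_pos hx]; ring_nf
  have h1' : IntegrableOn (fun x : ℝ => Real.exp (-(b * |x|))) (Set.Ici 0) :=
    (integrableOn_Ici_iff_integrableOn_Ioi).mpr h1
  have h2 : IntegrableOn (fun x : ℝ => Real.exp (-(b * |x|))) (Set.Iic 0) := by
    have := A.integrableOn_map_iff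
      (f := fun x : ℝ => Real.exp (-(b * |x|))) (μ := volume) (s := Set.Ici 0)
    rw [Measure.map_neg_eq_self (volume : Measure ℝ)] at this
    have heq : ((fun x : ℝ => Real.exp (-(b * |x|))) ∘ fun x : ℝ => -x)
        = fun x : ℝ => Real.exp (-(b * |x|)) := by
      funext x; simp [Function.comp, abs_neg]
    rw [heq] at this
    have hpre : (fun x : ℝ => -x) ⁻¹' Set.Ici 0 = Set.Iic 0 := by
      ext x; simp
    rw [hpre] at this
    exact this.mp h1'
  have := h2.union h1'
  rwa [Set.Iic_union_Ici, integrableOn_univ] at this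

lemma integrable_exp_mul_Wh {a : ℝ} (ha : |a| < Real.sqrt 2) :
    Integrable (fun y : ℝ => Real.exp (a * y) * Wh y) := by
  have hb : 0 < Real.sqrt 2 - |a| := by linarith
  refine Integrable.mono' (((integrable_exp_neg_abs hb).const_mul 4))
    ((Real.continuous_exp.comp (continuous_const.mul continuous_id)).mul
      continuous_Wh).aestronglyMeasurable (ae_of_all _ fun y => ?_)
  rw [Real.norm_eq_abs, abs_of_nonneg (mul_nonneg (Real.exp_pos _).le (Wh_nonneg y))]
  calc Real.exp (a * y) * Wh y
      ≤ Real.exp (|a| * |y|) * (4 * Real.exp (-(Real.sqrt 2 * |y|))) := by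
        refine mul_le_mul (Real.exp_le_exp.mpr ?_) (Wh_le y) (Wh_nonneg y) (Real.exp_pos _).le
        calc a * y ≤ |a * y| := le_abs_self _
        _ = |a| * |y| := abs_mul a y
    _ = 4 * Real.exp (-((Real.sqrt 2 - |a|) * |y|)) := by
        rw [mul_left_comm, ← Real.exp_add]
        congr 2
        ring

lemma integral_exp_mul_Wh_pos {a : ℝ} (ha : |a| < Real.sqrt 2) :
    0 < ∫ y : ℝ, Real.exp (a * y) * Wh y := by
  rw [integral_pos_iff_support_of_nonneg
    (fun y => mul_nonneg (Real.exp_pos _).le (Wh_nonneg y)) (integrable_exp_mul_Wh ha)]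
  have hsub : Set.Ioi (0:ℝ) ⊆ Function.support fun y => Real.exp (a * y) * Wh y :=
    fun y hy => ne_of_gt (mul_pos (Real.exp_pos _) (Wh_pos hy))
  calc (0 : ENNReal) < volume (Set.Ioi (0:ℝ)) := by rw [Real.volume_Ioi]; exact ENNReal.zero_lt_top
  _ ≤ _ := measure_mono hsub

/-- Exponential decay lemma, `0 < μ < 1` case: if `H'(x) ~ h₊ e^{−μ√2 x}` as
`x → +∞` and `H'(x) ~ h₋ e^{μ√2 x}` as `x → −∞` (with uniform bounds), then the
Melnikov function `S(ψ) = ∫ H'(y + ψ/√2) W_h(y) dy` decays with the same exponential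
rate: `e^{μψ} S(ψ) → h₊ w₊` and `e^{−μψ} S(ψ) → h₋ w₋`, where
`w± = ∫ e^{∓μ√2 y} W_h(y) dy` are finite and positive. -/
theorem melnikov_exponential_decay (μ : ℝ) (hμ : μ ∈ Set.Ioo (0 : ℝ) 1)
    (H : ℝ → ℝ) (hH : ContDiff ℝ 1 H)
    (hplus hminus : ℝ) (hplus0 : hplus ≠ 0) (hminus0 : hminus ≠ 0)
    (hlimp : Tendsto (fun x : ℝ => Real.exp (μ * Real.sqrt 2 * x) * deriv H x)
      atTop (𝓝 hplus))
    (hlimm : Tendsto (fun x : ℝ => Real.exp (-(μ * Real.sqrt 2) * x) * deriv H x)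
      atBot (𝓝 hminus))
    (hbd : ∃ C : ℝ, ∀ x : ℝ, Real.exp (μ * Real.sqrt 2 * |x|) * |deriv H x| ≤ C) :
    Integrable (fun y : ℝ => Real.exp (-(μ * Real.sqrt 2) * y) * Wh y) ∧
    Integrable (fun y : ℝ => Real.exp (μ * Real.sqrt 2 * y) * Wh y) ∧
    (0 < ∫ y : ℝ, Real.exp (-(μ * Real.sqrt 2) * y) * Wh y) ∧
    (0 < ∫ y : ℝ, Real.exp (μ * Real.sqrt 2 * y) * Wh y) ∧
    Tendsto (fun ψ : ℝ =>
        Real.exp (μ * ψ) * ∫ y : ℝ, deriv H (y + ψ / Real.sqrt 2) * Wh y) atTop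
      (𝓝 (hplus * ∫ y : ℝ, Real.exp (-(μ * Real.sqrt 2) * y) * Wh y)) ∧
    Tendsto (fun ψ : ℝ =>
        Real.exp (-(μ * ψ)) * ∫ y : ℝ, deriv H (y + ψ / Real.sqrt 2) * Wh y) atBot
      (𝓝 (hminus * ∫ y : ℝ, Real.exp (μ * Real.sqrt 2 * y) * Wh y)) := by
  obtain ⟨hμ0, hμ1⟩ := hμ
  obtain ⟨C, hC⟩ := hbd
  have hs2 : (0:ℝ) < Real.sqrt 2 := sqrt2_pos
  have hC0 : (0:ℝ) ≤ C := le_trans (by positivity) (hC 0)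
  have hb1 : |(-(μ * Real.sqrt 2))| < Real.sqrt 2 := by
    rw [abs_neg, abs_of_pos (by positivity)]; nlinarith
  have hb2 : |μ * Real.sqrt 2| < Real.sqrt 2 := by
    rw [abs_of_pos (by positivity)]; nlinarith
  have I1 : Integrable (fun y : ℝ => Real.exp (-(μ * Real.sqrt 2) * y) * Wh y) :=
    integrable_exp_mul_Wh hb1
  have I2 : Integrable (fun y : ℝ => Real.exp (μ * Real.sqrt 2 * y) * Wh y) :=
    integrable_exp_mul_Wh hb2
  have hHd : Continuous (deriv H) := hH.continuous_deriv le_rfl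
  have hid : ∀ y ψ : ℝ, μ * Real.sqrt 2 * (y + ψ / Real.sqrt 2)
      = μ * Real.sqrt 2 * y + μ * ψ := by
    intro y ψ
    field_simp
  refine ⟨I1, I2, integral_exp_mul_Wh_pos hb1, integral_exp_mul_Wh_pos hb2, ?_, ?_⟩
  · -- atTop
    have key : Tendsto (fun ψ : ℝ => ∫ y : ℝ,
        Real.exp (μ * ψ) * (deriv H (y + ψ / Real.sqrt 2) * Wh y)) atTop
        (𝓝 (∫ y : ℝ, hplus * (Real.exp (-(μ * Real.sqrt 2) * y) * Wh y))) := by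
      refine tendsto_integral_filter_of_dominated_convergence
        (bound := fun y => C * (Real.exp (-(μ * Real.sqrt 2) * y) * Wh y))
        (Eventually.of_forall fun ψ => ?_)
        (Eventually.of_forall fun ψ => ae_of_all _ fun y => ?_)
        (I1.const_mul C) (ae_of_all _ fun y => ?_)
      · exact (continuous_const.mul ((hHd.comp (continuous_id.add continuous_const)).mul
          continuous_Wh)).aestronglyMeasurable
      · set x := y + ψ / Real.sqrt 2 with hxdef
        have hkey : Real.exp (μ * ψ)
            = Real.exp (-(μ * Real.sqrt 2) * y) * Real.exp (μ * Real.sqrt 2 * x) := by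
          rw [← Real.exp_add, hxdef, hid y ψ]; ring_nf
        have hb : Real.exp (μ * Real.sqrt 2 * x) * |deriv H x| ≤ C := by
          have h1 : Real.exp (μ * Real.sqrt 2 * x) ≤ Real.exp (μ * Real.sqrt 2 * |x|) :=
            Real.exp_le_exp.mpr (mul_le_mul_of_nonneg_left (le_abs_self x) (by positivity))
          exact le_trans (mul_le_mul_of_nonneg_right h1 (abs_nonneg _)) (hC x)
        rw [Real.norm_eq_abs, abs_mul, abs_mul, abs_of_pos (Real.exp_pos _),
          abs_of_nonneg (Wh_nonneg y), hkey]
        calc Real.exp (-(μ * Real.sqrt 2) * y) * Real.exp (μ * Real.sqrt 2 * x)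
              * (|deriv H x| * Wh y)
            = Real.exp (-(μ * Real.sqrt 2) * y)
              * (Real.exp (μ * Real.sqrt 2 * x) * |deriv H x|) * Wh y := by ring
          _ ≤ Real.exp (-(μ * Real.sqrt 2) * y) * C * Wh y := by
              exact mul_le_mul_of_nonneg_right
                (mul_le_mul_of_nonneg_left hb (Real.exp_pos _).le) (Wh_nonneg y)
          _ = C * (Real.exp (-(μ * Real.sqrt 2) * y) * Wh y) := by ring
      · have h1 : Tendsto (fun ψ : ℝ => y + ψ / Real.sqrt 2) atTop atTop :=
          tendsto_atTop_add_const_left _ y (tendsto_id.atTop_div_const hs2)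
        have h3 := (hlimp.comp h1).const_mul (Real.exp (-(μ * Real.sqrt 2) * y) * Wh y)
        rw [show hplus * (Real.exp (-(μ * Real.sqrt 2) * y) * Wh y)
            = (Real.exp (-(μ * Real.sqrt 2) * y) * Wh y) * hplus from mul_comm _ _]
        refine h3.congr fun ψ => ?_
        simp only [Function.comp]
        have hkey : Real.exp (μ * ψ)
            = Real.exp (-(μ * Real.sqrt 2) * y)
              * Real.exp (μ * Real.sqrt 2 * (y + ψ / Real.sqrt 2)) := by
          rw [← Real.exp_add, hid y ψ]; ring_nf
        rw [hkey]; ring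
    simpa only [MeasureTheory.integral_const_mul] using key
  · -- atBot
    have key : Tendsto (fun ψ : ℝ => ∫ y : ℝ,
        Real.exp (-(μ * ψ)) * (deriv H (y + ψ / Real.sqrt 2) * Wh y)) atBot
        (𝓝 (∫ y : ℝ, hminus * (Real.exp (μ * Real.sqrt 2 * y) * Wh y))) := by
      refine tendsto_integral_filter_of_dominated_convergence
        (bound := fun y => C * (Real.exp (μ * Real.sqrt 2 * y) * Wh y))
        (Eventually.of_forall fun ψ => ?_)
        (Eventually.of_forall fun ψ => ae_of_all _ fun y => ?_)
        (I2.const_mul C) (ae_of_all _ fun y => ?_)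
      · exact (continuous_const.mul ((hHd.comp (continuous_id.add continuous_const)).mul
          continuous_Wh)).aestronglyMeasurable
      · set x := y + ψ / Real.sqrt 2 with hxdef
        have hkey : Real.exp (-(μ * ψ))
            = Real.exp (μ * Real.sqrt 2 * y) * Real.exp (-(μ * Real.sqrt 2) * x) := by
          rw [← Real.exp_add, hxdef]
          congr 1
          have := hid y ψ
          linarith
        have hb : Real.exp (-(μ * Real.sqrt 2) * x) * |deriv H x| ≤ C := by
          have h1 : Real.exp (-(μ * Real.sqrt 2) * x) ≤ Real.exp (μ * Real.sqrt 2 * |x|) := by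
            refine Real.exp_le_exp.mpr ?_
            have := neg_abs_le x
            nlinarith [mul_le_mul_of_nonneg_left (neg_le_abs x) (by positivity : (0:ℝ) ≤ μ * Real.sqrt 2)]
          exact le_trans (mul_le_mul_of_nonneg_right h1 (abs_nonneg _)) (hC x)
        rw [Real.norm_eq_abs, abs_mul, abs_mul, abs_of_pos (Real.exp_pos _),
          abs_of_nonneg (Wh_nonneg y), hkey]
        calc Real.exp (μ * Real.sqrt 2 * y) * Real.exp (-(μ * Real.sqrt 2) * x)
              * (|deriv H x| * Wh y)
            = Real.exp (μ * Real.sqrt 2 * y)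
              * (Real.exp (-(μ * Real.sqrt 2) * x) * |deriv H x|) * Wh y := by ring
          _ ≤ Real.exp (μ * Real.sqrt 2 * y) * C * Wh y := by
              exact mul_le_mul_of_nonneg_right
                (mul_le_mul_of_nonneg_left hb (Real.exp_pos _).le) (Wh_nonneg y)
          _ = C * (Real.exp (μ * Real.sqrt 2 * y) * Wh y) := by ring
      · have h1 : Tendsto (fun ψ : ℝ => y + ψ / Real.sqrt 2) atBot atBot :=
          tendsto_atBot_add_const_left _ y (tendsto_id.atBot_div_const hs2)
        have h3 := (hlimm.comp h1).const_mul (Real.exp (μ * Real.sqrt 2 * y) * Wh y)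
        rw [show hminus * (Real.exp (μ * Real.sqrt 2 * y) * Wh y)
            = (Real.exp (μ * Real.sqrt 2 * y) * Wh y) * hminus from mul_comm _ _]
        refine h3.congr fun ψ => ?_
        simp only [Function.comp]
        have hkey : Real.exp (-(μ * ψ))
            = Real.exp (μ * Real.sqrt 2 * y)
              * Real.exp (-(μ * Real.sqrt 2) * (y + ψ / Real.sqrt 2)) := by
          rw [← Real.exp_add]
          congr 1
          have := hid y ψ
          linarith
        rw [hkey]; ring
    simpa only [MeasureTheory.integral_const_mul] using key
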